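/- arXiv:1708.00861 — 2 statements merged into one kernel-verified Lean document; each statement's English description precedes it below -/
import Mathlib

section
/- Let U ⊆ ℝ² be open and η : U → ℝ³ be twice continuously differentiable, with induced metric g_{ij}(y) = ⟨∂_iη(y), ∂_jη(y)⟩ satisfying det(g_{ij}(y)) > 0 for all y ∈ U; write g^{ij} for the inverse entries and g = det(g_{ij}). Then at every point of U and for every k ∈ {1,2}: Σ_{i=1}^{2} ∂_i( √g · g^{ik} ) = − √g Σ_{i,j,l=1}^{2} g^{ij} g^{kl} ⟨∂²_{ij}η, ∂_lη⟩. -/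
/-!
In two dimensions `√g g^{ik} = adj(g)_{ik} / √g`, so the quotient rule together with the
identity `adj g · N · adj g = tr(adj g · N) adj g − det g · adj N` for `2 × 2` matrices gives
`∂_m(√g g^{ik}) = √g (½ tr(g⁻¹ ∂_m g) g^{ik} − (g⁻¹ ∂_m g g⁻¹)^{ik})`.
Writing `∂_m g_{ij} = Γ_{mi,j} + Γ_{mj,i}` with `Γ_{ij,l} = ⟨∂²_{ij}η, ∂_lη⟩` symmetric in `i, j`,
the sum over `m = i` of the trace term cancels one half of the conjugation term, and what
is left is `−√g g^{ij} g^{kl} Γ_{ij,l}`.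
-/

open Matrix

/-- The vector of partial derivatives `∂_i η(y) ∈ ℝ³` of a map `η : ℝ² → ℝ³`. -/
noncomputable def pdEmb (η : (Fin 2 → ℝ) → Fin 3 → ℝ) (i : Fin 2)
    (y : Fin 2 → ℝ) : Fin 3 → ℝ :=
  fderiv ℝ η y (Pi.single i 1)

/-- The second partial derivatives `∂²_{ij} η(y) ∈ ℝ³` of a map `η : ℝ² → ℝ³`. -/
noncomputable def pd2Emb (η : (Fin 2 → ℝ) → Fin 3 → ℝ) (i j : Fin 2)
    (y : Fin 2 → ℝ) : Fin 3 → ℝ :=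
  fderiv ℝ (fun z => fderiv ℝ η z (Pi.single j 1)) y (Pi.single i 1)

/-- The induced metric `g_{ij}(y) = ⟨∂_i η(y), ∂_j η(y)⟩`. -/
noncomputable def inducedMetric (η : (Fin 2 → ℝ) → Fin 3 → ℝ)
    (y : Fin 2 → ℝ) : Matrix (Fin 2) (Fin 2) ℝ :=
  Matrix.of fun i j => ∑ a, pdEmb η i y a * pdEmb η j y a

section Algebra

variable {ι : Type*} [Fintype ι]

theorem sqrt_det_mul_inv_apply [DecidableEq ι] (A : Matrix ι ι ℝ) (i k : ι) :
    √A.det * A⁻¹ i k = A.adjugate i k / √A.det := by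
  rw [inv_def, Ring.inverse_eq_inv, Matrix.smul_apply, smul_eq_mul, ← mul_assoc,
    ← div_eq_mul_inv, Real.sqrt_div_self', one_div, inv_mul_eq_div]

theorem adjugate_mul_mul_adjugate_fin_two (A N : Matrix (Fin 2) (Fin 2) ℝ) :
    A.adjugate * N * A.adjugate = trace (A.adjugate * N) • A.adjugate - A.det • N.adjugate := by
  rw [adjugate_fin_two, adjugate_fin_two, eta_fin_two N]
  simp only [mul_fin_two, trace_fin_two, det_fin_two]
  ext i j
  fin_cases i <;> fin_cases j <;>
    simp only [Fin.zero_eta, Fin.mk_one, of_apply, cons_val', cons_val_zero, cons_val_one,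
      cons_val_fin_one, smul_of, smul_cons, smul_eq_mul, smul_empty, Matrix.sub_apply] <;> ring

theorem sum_sum_sum_comm_outer {α β γ M : Type*} [Fintype α] [Fintype β] [Fintype γ]
    [AddCommMonoid M] (f : α → β → γ → M) :
    ∑ i, ∑ a, ∑ b, f i a b = ∑ b, ∑ a, ∑ i, f i a b :=
  calc _ = ∑ a, ∑ i, ∑ b, f i a b := Finset.sum_comm
    _ = ∑ a, ∑ b, ∑ i, f i a b := Finset.sum_congr rfl fun _ _ => Finset.sum_comm
    _ = _ := Finset.sum_comm

theorem sum_half_trace_mul_sub_conj_apply {H : Matrix ι ι ℝ} (hH : H.IsSymm)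
    {Γ : ι → ι → ι → ℝ} (hΓ : ∀ i j l, Γ i j l = Γ j i l) (k : ι) :
    ∑ i, (trace (H * of fun a b => Γ i a b + Γ i b a) / 2 * H i k
        - (H * (of fun a b => Γ i a b + Γ i b a) * H) i k)
      = -∑ i, ∑ j, ∑ l, H i j * H k l * Γ i j l := by
  have hH' : ∀ a b, H b a = H a b := hH.apply
  have htrace : ∀ i, trace (H * of fun a b => Γ i a b + Γ i b a)
      = 2 * ∑ a, ∑ b, H a b * Γ i a b := by
    intro i
    have hswap : ∑ a, ∑ b, H a b * Γ i b a = ∑ a, ∑ b, H a b * Γ i a b := by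
      rw [Finset.sum_comm]
      simp only [hH']
    simp only [trace, diag, mul_apply, of_apply, mul_add, Finset.sum_add_distrib, hswap]
    ring
  have hconj : ∀ i, (H * (of fun a b => Γ i a b + Γ i b a) * H) i k
      = ∑ a, ∑ b, H i a * Γ i a b * H b k + ∑ a, ∑ b, H i a * Γ i b a * H b k := by
    intro i
    simp only [mul_apply, of_apply, Finset.sum_mul, mul_add, add_mul, Finset.sum_add_distrib]
    rw [Finset.sum_comm (f := fun b a => H i a * Γ i a b * H b k),
      Finset.sum_comm (f := fun b a => H i a * Γ i b a * H b k)]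
  have hrename : ∑ i, ∑ a, ∑ b, H i a * Γ i b a * H b k
      = ∑ i, ∑ a, ∑ b, H a b * Γ i a b * H i k := by
    rw [sum_sum_sum_comm_outer]
    refine Finset.sum_congr rfl fun i _ => ?_
    rw [Finset.sum_comm]
    exact Finset.sum_congr rfl fun a _ => Finset.sum_congr rfl fun b _ => by rw [hΓ a i b]
  have hcontract : ∑ i, ∑ a, ∑ b, H i a * Γ i a b * H b k
      = ∑ i, ∑ j, ∑ l, H i j * H k l * Γ i j l :=
    Finset.sum_congr rfl fun i _ => Finset.sum_congr rfl fun j _ =>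
      Finset.sum_congr rfl fun l _ => by rw [hH' k l]; ring
  simp only [htrace, hconj, mul_div_cancel_left₀ _ (two_ne_zero' ℝ), Finset.sum_mul]
  rw [Finset.sum_sub_distrib, Finset.sum_add_distrib, hrename, hcontract]
  ring

end Algebra

section Calculus

variable {E : Type*} [NormedAddCommGroup E] [NormedSpace ℝ E] {y : E}

theorem fderiv_div_sqrt_apply {u d : E → ℝ} (hu : DifferentiableAt ℝ u y)
    (hd : DifferentiableAt ℝ d y) (hpos : 0 < d y) (v : E) :
    fderiv ℝ (fun z => u z / √(d z)) y v
      = fderiv ℝ u y v / √(d y) - u y * fderiv ℝ d y v / (2 * d y * √(d y)) := by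
  have hsqrt : 0 < √(d y) := Real.sqrt_pos.mpr hpos
  have hinv : HasDerivAt (fun t => (√t)⁻¹) (-(1 / (2 * √(d y))) / √(d y) ^ 2) (d y) :=
    (Real.hasDerivAt_sqrt hpos.ne').inv hsqrt.ne'
  have hderiv : HasFDerivAt (fun z => u z / √(d z)) _ y :=
    hu.hasFDerivAt.mul (hinv.comp_hasFDerivAt y hd.hasFDerivAt)
  rw [hderiv.fderiv]
  simp only [_root_.add_apply, _root_.smul_apply, smul_eq_mul]
  field_simp
  rw [Real.sq_sqrt hpos.le]
  ring

noncomputable def entrywiseFDeriv {m n : Type*} (M : E → Matrix m n ℝ) (y v : E) :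
    Matrix m n ℝ :=
  of fun i j => fderiv ℝ (fun z => M z i j) y v

variable {M : E → Matrix (Fin 2) (Fin 2) ℝ}

theorem differentiableAt_det_fin_two (hM : ∀ i j, DifferentiableAt ℝ (fun z => M z i j) y) :
    DifferentiableAt ℝ (fun z => (M z).det) y := by
  simpa only [det_fin_two] using ((hM 0 0).fun_mul (hM 1 1)).fun_sub ((hM 0 1).fun_mul (hM 1 0))

theorem fderiv_det_fin_two_apply (hM : ∀ i j, DifferentiableAt ℝ (fun z => M z i j) y) (v : E) :
    fderiv ℝ (fun z => (M z).det) y v = trace ((M y).adjugate * entrywiseFDeriv M y v) := by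
  simp only [det_fin_two]
  rw [fderiv_fun_sub ((hM 0 0).fun_mul (hM 1 1)) ((hM 0 1).fun_mul (hM 1 0)),
    fderiv_fun_mul (hM 0 0) (hM 1 1), fderiv_fun_mul (hM 0 1) (hM 1 0)]
  simp only [adjugate_fin_two, trace_fin_two, mul_apply, Fin.sum_univ_two, entrywiseFDeriv,
    of_apply, _root_.sub_apply, _root_.add_apply, _root_.smul_apply, smul_eq_mul, cons_val',
    cons_val_zero, cons_val_fin_one, cons_val_one]
  ring

theorem differentiableAt_adjugate_fin_two_apply
    (hM : ∀ i j, DifferentiableAt ℝ (fun z => M z i j) y) (i k : Fin 2) :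
    DifferentiableAt ℝ (fun z => (M z).adjugate i k) y := by
  fin_cases i <;> fin_cases k <;> simp [adjugate_fin_two, hM]

theorem fderiv_adjugate_fin_two_apply (i k : Fin 2) (v : E) :
    fderiv ℝ (fun z => (M z).adjugate i k) y v = (entrywiseFDeriv M y v).adjugate i k := by
  fin_cases i <;> fin_cases k <;> simp [adjugate_fin_two, entrywiseFDeriv, fderiv_fun_neg]

theorem fderiv_sqrt_det_mul_inv_apply (hM : ∀ i j, DifferentiableAt ℝ (fun z => M z i j) y)
    (hdet : 0 < (M y).det) (i k : Fin 2) (v : E) :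
    fderiv ℝ (fun z => √(M z).det * (M z)⁻¹ i k) y v
      = √(M y).det * (trace ((M y)⁻¹ * entrywiseFDeriv M y v) / 2 * (M y)⁻¹ i k
          - ((M y)⁻¹ * entrywiseFDeriv M y v * (M y)⁻¹) i k) := by
  simp only [sqrt_det_mul_inv_apply]
  rw [fderiv_div_sqrt_apply (differentiableAt_adjugate_fin_two_apply hM i k)
      (differentiableAt_det_fin_two hM) hdet,
    fderiv_adjugate_fin_two_apply, fderiv_det_fin_two_apply hM]
  set A := M y
  set N := entrywiseFDeriv M y v
  have hconj := congrFun (congrFun (adjugate_mul_mul_adjugate_fin_two A N) i) k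
  rw [inv_def, Ring.inverse_eq_inv]
  simp only [Matrix.smul_mul, Matrix.mul_smul, trace_smul, Matrix.smul_apply, smul_eq_mul,
    Matrix.sub_apply] at hconj ⊢
  have hs : √A.det ^ 2 = A.det := Real.sq_sqrt hdet.le
  have hs0 : √A.det ≠ 0 := (Real.sqrt_pos.mpr hdet).ne'
  field_simp
  rw [hs, hconj]
  ring

end Calculus

section InducedMetric

noncomputable def christoffelFirst (η : (Fin 2 → ℝ) → Fin 3 → ℝ) (i j l : Fin 2)
    (y : Fin 2 → ℝ) : ℝ :=
  ∑ a, pd2Emb η i j y a * pdEmb η l y a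

theorem inducedMetric_isSymm (η : (Fin 2 → ℝ) → Fin 3 → ℝ) (y : Fin 2 → ℝ) :
    (inducedMetric η y).IsSymm := by
  ext i j
  simp only [transpose_apply, inducedMetric, of_apply, mul_comm]

variable {η : (Fin 2 → ℝ) → Fin 3 → ℝ} {y : Fin 2 → ℝ}

theorem differentiableAt_pdEmb (hη : ContDiffAt ℝ 2 η y) (i : Fin 2) :
    DifferentiableAt ℝ (pdEmb η i) y :=
  ((hη.fderiv_right le_rfl).differentiableAt one_ne_zero).clm_apply (differentiableAt_const _)

theorem pd2Emb_comm (hη : ContDiffAt ℝ 2 η y) (i j : Fin 2) :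
    pd2Emb η i j y = pd2Emb η j i y := by
  have hsnd : ∀ i j : Fin 2,
      pd2Emb η i j y = fderiv ℝ (fderiv ℝ η) y (Pi.single i 1) (Pi.single j 1) := by
    intro i j
    rw [pd2Emb, fderiv_clm_apply ((hη.fderiv_right le_rfl).differentiableAt one_ne_zero)
      (differentiableAt_const _)]
    simp
  rw [hsnd, hsnd]
  exact hη.isSymmSndFDerivAt (by simp [minSmoothness_of_isRCLikeNormedField]) _ _

theorem christoffelFirst_comm (hη : ContDiffAt ℝ 2 η y) (i j l : Fin 2) :
    christoffelFirst η i j l y = christoffelFirst η j i l y := by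
  simp only [christoffelFirst, pd2Emb_comm hη i j]

theorem differentiableAt_inducedMetric_apply (hη : ContDiffAt ℝ 2 η y) (i j : Fin 2) :
    DifferentiableAt ℝ (fun z => inducedMetric η z i j) y := by
  have hpd := fun i => differentiableAt_pi.1 (differentiableAt_pdEmb hη i)
  simp only [inducedMetric, of_apply]
  fun_prop

theorem entrywiseFDeriv_inducedMetric (hη : ContDiffAt ℝ 2 η y) (m : Fin 2) :
    entrywiseFDeriv (inducedMetric η) y (Pi.single m 1)
      = of fun i j => christoffelFirst η m i j y + christoffelFirst η m j i y := by
  have hpd := fun i => differentiableAt_pi.1 (differentiableAt_pdEmb hη i)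
  have hpd2 : ∀ i, fderiv ℝ (pdEmb η i) y (Pi.single m 1) = pd2Emb η m i y := fun _ => rfl
  ext i j
  simp only [entrywiseFDeriv, inducedMetric, christoffelFirst, of_apply]
  rw [fderiv_fun_sum fun a _ => (hpd i a).fun_mul (hpd j a)]
  simp only [_root_.sum_apply, fderiv_fun_mul (hpd i _) (hpd j _), _root_.add_apply,
    _root_.smul_apply, smul_eq_mul, fderiv_apply (differentiableAt_pdEmb hη _),
    ContinuousLinearMap.comp_apply, ContinuousLinearMap.proj_apply, hpd2,
    ← Finset.sum_add_distrib]
  exact Finset.sum_congr rfl fun a _ => by ring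

end InducedMetric

/-- For a `C²` embedding `η : U ⊆ ℝ² → ℝ³` with induced metric `g` of positive
determinant, `Σ_i ∂_i(√g g^{ik}) = −√g Σ_{i,j,l} g^{ij} g^{kl} ⟨∂²_{ij}η, ∂_lη⟩`
(identity (EQ57) of the paper). -/
theorem div_sqrtDet_inverse_metric (U : Set (Fin 2 → ℝ)) (hU : IsOpen U)
    (η : (Fin 2 → ℝ) → Fin 3 → ℝ) (hη : ContDiffOn ℝ 2 η U)
    (hgdet : ∀ y ∈ U, 0 < (inducedMetric η y).det)
    (y : Fin 2 → ℝ) (hy : y ∈ U) (k : Fin 2) :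
    ∑ i, fderiv ℝ
        (fun z => Real.sqrt (inducedMetric η z).det * (inducedMetric η z)⁻¹ i k)
        y (Pi.single i 1)
      = - Real.sqrt (inducedMetric η y).det
          * ∑ i, ∑ j, ∑ l, (inducedMetric η y)⁻¹ i j * (inducedMetric η y)⁻¹ k l
              * ∑ a, pd2Emb η i j y a * pdEmb η l y a := by
  have hC2 : ContDiffAt ℝ 2 η y := hη.contDiffAt (hU.mem_nhds hy)
  simp only [fderiv_sqrt_det_mul_inv_apply (differentiableAt_inducedMetric_apply hC2)
      (hgdet y hy), entrywiseFDeriv_inducedMetric hC2, ← Finset.mul_sum]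
  rw [sum_half_trace_mul_sub_conj_apply (inducedMetric_isSymm η y).inv
    (christoffelFirst_comm hC2), mul_neg, neg_mul]
  rfl
end

section
/- Let 𝒩 : [0,∞) → ℝ be continuous and nonnegative, let P : ℝ → ℝ be continuous, nondecreasing, and strictly positive, and let C₀ > 0. Set M = 𝒩(0) and M₁ = 2 C₀ P(M). Assume that for every t ≥ 0: 𝒩(t) ≤ C₀ P(M) + P(𝒩(t)) · ∫₀ᵗ P(𝒩(s)) ds. Then 𝒩(t) ≤ M₁ for every t ∈ [0, C₀ P(M) / P(M₁)²]. -/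
/-- **Gronwall-type barrier argument.** If `𝒩 : [0,∞) → ℝ` is continuous and
nonnegative, `P` is continuous, nondecreasing and strictly positive, `C₀ > 0`,
and `𝒩(t) ≤ C₀ P(𝒩(0)) + P(𝒩(t)) ∫₀ᵗ P(𝒩(s)) ds` for all `t ≥ 0`, then with
`M = 𝒩(0)` and `M₁ = 2 C₀ P(M)` we have `𝒩(t) ≤ M₁` on `[0, C₀ P(M)/P(M₁)²]`. -/
theorem gronwall_barrier (N : ℝ → ℝ)
    (hNcont : ContinuousOn N (Set.Ici (0 : ℝ)))
    (hNnonneg : ∀ t, 0 ≤ t → 0 ≤ N t)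
    (P : ℝ → ℝ) (hPcont : Continuous P) (hPmono : Monotone P)
    (hPpos : ∀ x, 0 < P x)
    (C₀ : ℝ) (hC₀ : 0 < C₀)
    (hmain : ∀ t, 0 ≤ t →
      N t ≤ C₀ * P (N 0) + P (N t) * ∫ s in (0 : ℝ)..t, P (N s)) :
    ∀ t ∈ Set.Icc (0 : ℝ) (C₀ * P (N 0) / (P (2 * C₀ * P (N 0))) ^ 2),
      N t ≤ 2 * C₀ * P (N 0) := by
  set M₁ := 2 * C₀ * P (N 0) with hM₁def
  set T := C₀ * P (N 0) / (P M₁) ^ 2 with hTdef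
  have hPM : 0 < P (N 0) := hPpos _
  have hM₁pos : 0 < M₁ := by positivity
  have hPM₁ : 0 < P M₁ := hPpos _
  have hTpos : 0 < T := by positivity
  have hTval : P M₁ ^ 2 * T = C₀ * P (N 0) := by
    rw [hTdef]; field_simp
  have hN0 : N 0 ≤ C₀ * P (N 0) := by
    have := hmain 0 le_rfl
    simpa using this
  have hN0lt : N 0 < M₁ := by nlinarith
  -- key estimate
  have key : ∀ t ∈ Set.Icc (0:ℝ) T, (∀ s ∈ Set.Icc (0:ℝ) t, N s ≤ M₁) →
      N t ≤ C₀ * P (N 0) + P M₁ ^ 2 * t := by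
    intro t ht hbound
    have h0t : (0:ℝ) ≤ t := ht.1
    have hint : IntervalIntegrable (fun s => P (N s)) MeasureTheory.volume 0 t := by
      apply ContinuousOn.intervalIntegrable_of_Icc h0t
      exact hPcont.comp_continuousOn (hNcont.mono (fun x hx => hx.1))
    have hIbd : (∫ s in (0:ℝ)..t, P (N s)) ≤ t * P M₁ := by
      calc (∫ s in (0:ℝ)..t, P (N s)) ≤ ∫ _s in (0:ℝ)..t, P M₁ :=
            intervalIntegral.integral_mono_on h0t hint intervalIntegrable_const
              (fun x hx => hPmono (hbound x hx))
        _ = t * P M₁ := by simp [mul_comm]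
    have hInonneg : 0 ≤ ∫ s in (0:ℝ)..t, P (N s) :=
      intervalIntegral.integral_nonneg h0t (fun x _ => (hPpos _).le)
    have hPNt : P (N t) ≤ P M₁ := hPmono (hbound t ⟨h0t, le_rfl⟩)
    have hm := hmain t h0t
    nlinarith [hPpos (N t)]
  intro t ht
  by_contra hcon
  push_neg at hcon
  set B := {u : ℝ | u ∈ Set.Icc (0:ℝ) T ∧ M₁ < N u} with hBdef
  have hBne : B.Nonempty := ⟨t, ht, hcon⟩
  have hBbdd : BddBelow B := ⟨0, fun u hu => hu.1.1⟩
  set c := sInf B with hcdef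
  have hcmem : ∀ b ∈ B, c ≤ b := fun b hb => csInf_le hBbdd hb
  have hc0 : 0 ≤ c := le_csInf hBne (fun b hb => hb.1.1)
  have hcT : c ≤ T := le_trans (hcmem t ⟨ht, hcon⟩) ht.2
  have hbefore : ∀ s ∈ Set.Ico (0:ℝ) c, N s ≤ M₁ := by
    intro s hs
    by_contra hns
    push_neg at hns
    have hsB : s ∈ B := ⟨⟨hs.1, le_trans hs.2.le hcT⟩, hns⟩
    exact absurd (hcmem s hsB) (not_le.mpr hs.2)
  have hNcle : N c ≤ M₁ := by
    rcases eq_or_lt_of_le hc0 with h0 | h0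
    · rw [← h0]; linarith
    · have hcl : ContinuousWithinAt N (Set.Ico 0 c) c :=
        (hNcont c hc0).mono (fun x hx => hx.1)
      have hccl : c ∈ closure (Set.Ico (0:ℝ) c) := by
        rw [closure_Ico h0.ne]
        exact ⟨hc0, le_rfl⟩
      haveI : (nhdsWithin c (Set.Ico (0:ℝ) c)).NeBot :=
        mem_closure_iff_nhdsWithin_neBot.mp hccl
      exact le_of_tendsto hcl.tendsto
        (Filter.eventually_iff_exists_mem.mpr
          ⟨Set.Ico 0 c, self_mem_nhdsWithin, hbefore⟩)
  have hNcge : M₁ ≤ N c := by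
    have hK : IsClosed (Set.Icc (0:ℝ) T ∩ N ⁻¹' Set.Ici M₁) :=
      ContinuousOn.preimage_isClosed_of_isClosed
        (hNcont.mono (fun x hx => hx.1)) isClosed_Icc isClosed_Ici
    have hBsub : B ⊆ Set.Icc (0:ℝ) T ∩ N ⁻¹' Set.Ici M₁ :=
      fun u hu => ⟨hu.1, hu.2.le⟩
    have hcK : c ∈ Set.Icc (0:ℝ) T ∩ N ⁻¹' Set.Ici M₁ :=
      ((closure_mono hBsub).trans hK.closure_eq.subset) (csInf_mem_closure hBne hBbdd)
    exact hcK.2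
  rcases lt_or_eq_of_le hcT with hlt | heq
  · have hall : ∀ s ∈ Set.Icc (0:ℝ) c, N s ≤ M₁ := by
      intro s hs
      rcases lt_or_eq_of_le hs.2 with h | h
      · exact hbefore s ⟨hs.1, h⟩
      · rw [h]; exact hNcle
    have hkey := key c ⟨hc0, hcT⟩ hall
    nlinarith [sq_nonneg (P M₁)]
  · have hteq : t = c := le_antisymm (heq ▸ ht.2) (hcmem t ⟨ht, hcon⟩)
    rw [hteq] at hcon; linarith
end
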